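/- arXiv:2110.08205 — 3 statements merged into one kernel-verified Lean document; each statement's English description precedes it below -/
import Mathlib

section
/- Let 0 ≤ τ_i < τ_j < n and consider the quadratics q_i(μ) = μ(S_n − S_{τ_i}) − (n−τ_i)μ²/2 and q_j(μ) = μ(S_n − S_{τ_j}) − (n−τ_j)μ²/2, both vanishing at μ = 0. Then q_i − q_j is a quadratic through the origin whose μ² coefficient is strictly negative; hence there exists a unique μ* = 2(S_{τ_j} − S_{τ_i})/(τ_j − τ_i) such that q_i(μ) ≥ q_j(μ) for all μ between 0 and μ* (when μ* > 0), and q_j(μ) ≥ q_i(μ) for all μ ≥ μ* ≥ 0. In particular, on μ > 0, a quadratic introduced at a later time can only be optimal for larger values of μ than one introduced earlier. -/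
/-!
The common terms `μ S_n - n μ² / 2` cancel in `q_i - q_j`, leaving `μ b - a μ² / 2` with
`a = τ_j - τ_i > 0` and `b = S_{τ_j} - S_{τ_i}`. This factors as `(a / 2) μ (μ* - μ)` with
`μ* = 2 b / a`, so its sign on `μ ≥ 0` is that of `μ* - μ`.
-/

section QuadraticThroughOrigin

variable {K : Type*} [Field K] [LinearOrder K] [IsStrictOrderedRing K] {a b μ : K}

theorem mul_sub_mul_sq_div_two_eq_mul_mul_sub (ha : a ≠ 0) :
    μ * b - a * μ ^ 2 / 2 = a / 2 * μ * (2 * b / a - μ) := by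
  field_simp

theorem mul_sub_mul_sq_div_two_nonneg (ha : 0 < a) (hμ : 0 ≤ μ) (hle : μ ≤ 2 * b / a) :
    0 ≤ μ * b - a * μ ^ 2 / 2 := by
  rw [mul_sub_mul_sq_div_two_eq_mul_mul_sub ha.ne']
  exact mul_nonneg (mul_nonneg (half_pos ha).le hμ) (sub_nonneg.2 hle)

theorem mul_sub_mul_sq_div_two_nonpos (ha : 0 < a) (hroot : 0 ≤ 2 * b / a)
    (hle : 2 * b / a ≤ μ) : μ * b - a * μ ^ 2 / 2 ≤ 0 := by
  rw [mul_sub_mul_sq_div_two_eq_mul_mul_sub ha.ne']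
  exact mul_nonpos_of_nonneg_of_nonpos
    (mul_nonneg (half_pos ha).le (hroot.trans hle)) (sub_nonpos.2 hle)

end QuadraticThroughOrigin

theorem focus0_quadratic_ordering_general (n τi τj : ℕ) (h1 : τi < τj) (x : ℕ → ℝ) :
    let S : ℕ → ℝ := fun t => ∑ k ∈ Finset.Icc 1 t, x k
    let qi : ℝ → ℝ := fun μ => μ * (S n - S τi) - ((n : ℝ) - τi) * μ ^ 2 / 2
    let qj : ℝ → ℝ := fun μ => μ * (S n - S τj) - ((n : ℝ) - τj) * μ ^ 2 / 2
    let μs : ℝ := 2 * (S τj - S τi) / ((τj : ℝ) - τi)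
    qi 0 = 0 ∧ qj 0 = 0 ∧
    (∀ μ : ℝ, qi μ - qj μ = μ * (S τj - S τi) - ((τj : ℝ) - τi) * μ ^ 2 / 2) ∧
    (0 : ℝ) < ((τj : ℝ) - τi) ∧
    (0 < μs → ∀ μ : ℝ, 0 ≤ μ → μ ≤ μs → qj μ ≤ qi μ) ∧
    (0 ≤ μs → ∀ μ : ℝ, μs ≤ μ → qi μ ≤ qj μ) := by
  intro S qi qj μs
  have hgap : (0 : ℝ) < (τj : ℝ) - τi := sub_pos.2 (Nat.cast_lt.2 h1)
  have hdiff : ∀ μ : ℝ, qi μ - qj μ = μ * (S τj - S τi) - ((τj : ℝ) - τi) * μ ^ 2 / 2 :=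
    fun μ => by ring
  refine ⟨by simp [qi], by simp [qj], hdiff, hgap, ?_, ?_⟩
  · intro _ μ hμ hle
    exact sub_nonneg.1 (hdiff μ ▸ mul_sub_mul_sq_div_two_nonneg hgap hμ hle)
  · intro hroot μ hle
    exact sub_nonpos.1 (hdiff μ ▸ mul_sub_mul_sq_div_two_nonpos hgap hroot hle)

/-- Ordering of FOCuS0 quadratics: for `τ_i < τ_j < n`, the difference `q_i − q_j`
is a quadratic through the origin with strictly negative `μ²` coefficient, whose
non-zero root is `μ* = 2(S_{τ_j} − S_{τ_i})/(τ_j − τ_i)`; `q_i ≥ q_j` on `[0, μ*]`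
(when `μ* > 0`) and `q_j ≥ q_i` on `[μ*, ∞)` when `μ* ≥ 0`. -/
theorem focus0_quadratic_ordering (n τi τj : ℕ) (h1 : τi < τj) (h2 : τj < n) (x : ℕ → ℝ) :
    let S : ℕ → ℝ := fun t => ∑ k ∈ Finset.Icc 1 t, x k
    let qi : ℝ → ℝ := fun μ => μ * (S n - S τi) - ((n : ℝ) - τi) * μ ^ 2 / 2
    let qj : ℝ → ℝ := fun μ => μ * (S n - S τj) - ((n : ℝ) - τj) * μ ^ 2 / 2
    let μs : ℝ := 2 * (S τj - S τi) / ((τj : ℝ) - τi)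
    qi 0 = 0 ∧ qj 0 = 0 ∧
    (∀ μ : ℝ, qi μ - qj μ = μ * (S τj - S τi) - ((τj : ℝ) - τi) * μ ^ 2 / 2) ∧
    (0 : ℝ) < ((τj : ℝ) - τi) ∧
    (0 < μs → ∀ μ : ℝ, 0 ≤ μ → μ ≤ μs → qj μ ≤ qi μ) ∧
    (0 ≤ μs → ∀ μ : ℝ, μs ≤ μ → qi μ ≤ qj μ) :=
  focus0_quadratic_ordering_general n τi τj h1 x
end

section
/- Let X_1,...,X_T be exchangeable real-valued random variables with a continuous (atomless) joint distribution, and let S_t = X_1 + ... + X_t with S_0 = 0. Then the expected number of vertices of the convex minorant (lower convex hull) of the points (t, S_t), t = 0,1,...,T, excluding the endpoint (0,0), is at most ∑_{k=1}^T 1/k ≤ log(T) + 1. -/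
open MeasureTheory
open scoped Classical ProbabilityTheory

/-!
Fix the increments `v` and average over their `T!` rearrangements `v ∘ σ`; by exchangeability it
suffices to show that the walks of all `v ∘ σ` have at most `T! H_T` vertices in total. Sort the
pairs `(σ, t)`, `t` a vertex of the walk of `v ∘ σ`, by the length `ℓ` of the face `[s, t]` of the
convex minorant ending at `t`. Cutting this face out, appending it at the end and rotating it in
one of `ℓ` ways yields `ℓ` rearrangements, and no rearrangement arises twice: tilted by the slope
of its last `ℓ` steps, the new walk has `s` as its last minimum before the appended block, and (the
cyclic lemma) the rotated block has a unique minimum, which locates the rotation. So at most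
`T! / ℓ` pairs have face length `ℓ`, and summing over `ℓ` gives `T! H_T`.
-/

open Finset
open scoped Nat

namespace ConvexMinorant

lemma card_le_mul_sum_inv_of_card_fiber_mul_le {α : Type*} {A : Finset α} {len : α → ℕ}
    {n M : ℕ} (hlen : ∀ q ∈ A, len q ∈ Icc 1 n)
    (hfiber : ∀ ℓ ∈ Icc 1 n, #{q ∈ A | len q = ℓ} * ℓ ≤ M) :
    (#A : ℝ) ≤ M * ∑ k ∈ Icc 1 n, (1 : ℝ) / k := by
  rw [card_eq_sum_card_fiberwise hlen, mul_sum]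
  push_cast
  refine sum_le_sum fun ℓ hℓ => ?_
  have hℓ0 : (0 : ℝ) < ℓ := by exact_mod_cast (mem_Icc.mp hℓ).1
  rw [mul_one_div, le_div_iff₀ hℓ0]
  exact_mod_cast hfiber ℓ hℓ

noncomputable def slope (f : ℕ → ℝ) (i j : ℕ) : ℝ := (f j - f i) / ((j : ℝ) - i)

def tilt (f : ℕ → ℝ) (c : ℝ) (r : ℕ) : ℝ := f r - c * r

section Slope

variable {f : ℕ → ℝ} {i j : ℕ} {c : ℝ}

lemma slope_le_iff (h : i < j) : slope f i j ≤ c ↔ tilt f c j ≤ tilt f c i := by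
  have hij : (0 : ℝ) < (j : ℝ) - i := sub_pos.mpr (Nat.cast_lt.mpr h)
  rw [slope, div_le_iff₀ hij, tilt, tilt]
  constructor <;> intro _ <;> linarith

lemma le_slope_iff (h : i < j) : c ≤ slope f i j ↔ tilt f c i ≤ tilt f c j := by
  have hij : (0 : ℝ) < (j : ℝ) - i := sub_pos.mpr (Nat.cast_lt.mpr h)
  rw [slope, le_div_iff₀ hij, tilt, tilt]
  constructor <;> intro _ <;> linarith

lemma slope_lt_iff (h : i < j) : slope f i j < c ↔ tilt f c j < tilt f c i := by
  rw [← not_le, le_slope_iff h, not_le]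

lemma lt_slope_iff (h : i < j) : c < slope f i j ↔ tilt f c i < tilt f c j := by
  rw [← not_le, slope_le_iff h, not_le]

lemma slope_eq_iff (h : i < j) : slope f i j = c ↔ tilt f c i = tilt f c j := by
  rw [le_antisymm_iff, slope_le_iff h, le_slope_iff h, le_antisymm_iff, and_comm]

lemma tilt_slope_eq (h : i < j) : tilt f (slope f i j) i = tilt f (slope f i j) j :=
  (slope_eq_iff h).mp rfl

end Slope

/-- `t` is a vertex of the convex minorant of `f` on `{0, …, T}` (vacuously so for `t = T`). -/
def IsStrictVertex (f : ℕ → ℝ) (T t : ℕ) : Prop :=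
  ∀ i j : ℕ, i < t → t < j → j ≤ T →
    f t < f i + (f j - f i) * (((t : ℝ) - i) / ((j : ℝ) - i))

lemma IsStrictVertex.slope_lt_slope {f : ℕ → ℝ} {T t i j : ℕ} (hv : IsStrictVertex f T t)
    (hi : i < t) (hj : t < j) (hjT : j ≤ T) : slope f i t < slope f t j := by
  set c := slope f i j
  have hchord : tilt f c t < tilt f c i := by
    have hline : (f j - f i) * (((t : ℝ) - i) / ((j : ℝ) - i)) = c * ((t : ℝ) - i) := by
      simp only [c, slope]; ring
    have := hv i j hi hj hjT
    rw [tilt, tilt]; linarith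
  have hij : tilt f c i = tilt f c j := tilt_slope_eq (hi.trans hj)
  exact ((slope_lt_iff hi).mpr hchord).trans ((lt_slope_iff hj).mpr (hij ▸ hchord))

/-- The left end of the face of the convex minorant of `f` that ends at `t` (junk `0` if `t = 0`). -/
noncomputable def lastMaxSlope (f : ℕ → ℝ) (t : ℕ) : ℕ :=
  Nat.findGreatest (fun i => ∀ k < t, slope f k t ≤ slope f i t) (t - 1)

/-- `[s, t]` is a face of the convex minorant of `f` on `{0, …, T}` that ends at a vertex `t` and
touches the graph of `f` only at `s` and `t`. -/
structure IsFace (f : ℕ → ℝ) (T s t : ℕ) : Prop where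
  lt : s < t
  le : t ≤ T
  left : ∀ i < s, tilt f (slope f s t) s ≤ tilt f (slope f s t) i
  inner : ∀ m, s < m → m < t → tilt f (slope f s t) s < tilt f (slope f s t) m
  right : ∀ j, t < j → j ≤ T → tilt f (slope f s t) s < tilt f (slope f s t) j

section LastMaxSlope

variable {f : ℕ → ℝ} {t : ℕ}

lemma lastMaxSlope_lt (ht : 0 < t) : lastMaxSlope f t < t :=
  (Nat.findGreatest_le _).trans_lt (Nat.sub_lt ht one_pos)

lemma slope_le_slope_lastMaxSlope (ht : 0 < t) {k : ℕ} (hk : k < t) :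
    slope f k t ≤ slope f (lastMaxSlope f t) t := by
  obtain ⟨m, hm, hmax⟩ := exists_max_image (range t) (fun i => slope f i t) ⟨0, mem_range.mpr ht⟩
  have hm' : m ≤ t - 1 := Nat.le_sub_one_of_lt (mem_range.mp hm)
  exact Nat.findGreatest_spec (P := fun i => ∀ k < t, slope f k t ≤ slope f i t) hm'
    (fun k hk => hmax k (mem_range.mpr hk)) k hk

lemma slope_lt_slope_lastMaxSlope (ht : 0 < t) {m : ℕ} (hm : lastMaxSlope f t < m)
    (hmt : m < t) : slope f m t < slope f (lastMaxSlope f t) t := by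
  refine (slope_le_slope_lastMaxSlope ht hmt).lt_of_ne fun heq => ?_
  refine Nat.findGreatest_is_greatest hm (by omega) fun k hk => ?_
  exact heq ▸ slope_le_slope_lastMaxSlope ht hk

lemma IsStrictVertex.isFace_lastMaxSlope {T : ℕ} (hv : IsStrictVertex f T t) (ht : 0 < t)
    (htT : t ≤ T) : IsFace f T (lastMaxSlope f t) t := by
  set s := lastMaxSlope f t
  have hs : s < t := lastMaxSlope_lt ht
  have hst := tilt_slope_eq (f := f) hs
  refine ⟨hs, htT, fun i hi => ?_, fun m hm hmt => ?_, fun j hj hjT => ?_⟩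
  · rw [hst, ← slope_le_iff (hi.trans hs)]
    exact slope_le_slope_lastMaxSlope ht (hi.trans hs)
  · rw [hst, ← slope_lt_iff hmt]
    exact slope_lt_slope_lastMaxSlope ht hm hmt
  · rw [hst, ← lt_slope_iff hj]
    exact hv.slope_lt_slope hs hj hjT

end LastMaxSlope

lemma IsFace.tilt_eq {f : ℕ → ℝ} {T s t : ℕ} (hf : IsFace f T s t) :
    tilt f (slope f s t) s = tilt f (slope f s t) t :=
  tilt_slope_eq hf.lt

def walk (x : ℕ → ℝ) (t : ℕ) : ℝ := ∑ p ∈ range t, x p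

@[simp] lemma tilt_walk_zero (x : ℕ → ℝ) (c : ℝ) : tilt (walk x) c 0 = 0 := by
  simp [tilt, walk]

lemma tilt_walk_add_sub_of_shift {x y : ℕ → ℝ} {m n k : ℕ} (c : ℝ)
    (h : ∀ i < k, y (m + i) = x (n + i)) :
    tilt (walk y) c (m + k) - tilt (walk y) c m = tilt (walk x) c (n + k) - tilt (walk x) c n := by
  simp only [tilt, walk, sum_range_add, sum_congr rfl fun i hi => h i (mem_range.mp hi)]
  push_cast; ring

/-- Moves the block `[s, s + ℓ)` to the end of `[0, T)` and rotates it: `x ∘ blockRotate T s ℓ a`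
runs through `x` on `[0, s)`, `[s + ℓ, T)`, `[s + a, s + ℓ)` and `[s, s + a)`, in this order. -/
def blockRotate (T s ℓ a p : ℕ) : ℕ :=
  if p < s then p
  else if p < T - ℓ then p + ℓ
  else if p < T - a then p - (T - ℓ) + (s + a)
  else p - (T - a) + s

section BlockRotate

variable {T s ℓ a : ℕ}

lemma blockRotate_lt (hT : s + ℓ ≤ T) (ha : a ≤ ℓ) {p : ℕ} (hp : p < T) :
    blockRotate T s ℓ a p < T := by
  unfold blockRotate; split_ifs <;> omega

lemma blockRotate_injOn (hT : s + ℓ ≤ T) (ha : a ≤ ℓ) {p q : ℕ} (hp : p < T) (hq : q < T)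
    (h : blockRotate T s ℓ a p = blockRotate T s ℓ a q) : p = q := by
  unfold blockRotate at h; split_ifs at h <;> omega

variable {x y : ℕ → ℝ} (c : ℝ)

lemma tilt_walk_blockRotate_of_le (hy : ∀ p < T, y p = x (blockRotate T s ℓ a p))
    (hT : s + ℓ ≤ T) {r : ℕ} (hr : r ≤ s) :
    tilt (walk y) c r = tilt (walk x) c r := by
  have := tilt_walk_add_sub_of_shift (x := x) (y := y) (m := 0) (n := 0) (k := r) c fun i hi => by
    rw [hy _ (by omega), blockRotate, if_pos (by omega)]
  simpa using this

lemma tilt_walk_blockRotate_middle (hy : ∀ p < T, y p = x (blockRotate T s ℓ a p))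
    {k : ℕ} (hk : s + k ≤ T - ℓ) :
    tilt (walk y) c (s + k) - tilt (walk y) c s
      = tilt (walk x) c (s + ℓ + k) - tilt (walk x) c (s + ℓ) :=
  tilt_walk_add_sub_of_shift c fun i hi => by
    rw [hy _ (by omega), blockRotate, if_neg (by omega), if_pos (by omega)]; ring_nf

lemma tilt_walk_blockRotate_tail (hy : ∀ p < T, y p = x (blockRotate T s ℓ a p))
    (hT : s + ℓ ≤ T) {j : ℕ} (hj : j ≤ ℓ - a) :
    tilt (walk y) c (T - ℓ + j) - tilt (walk y) c (T - ℓ)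
      = tilt (walk x) c (s + a + j) - tilt (walk x) c (s + a) :=
  tilt_walk_add_sub_of_shift c fun i hi => by
    rw [hy _ (by omega), blockRotate, if_neg (by omega), if_neg (by omega), if_pos (by omega)]
    congr 1; omega

lemma tilt_walk_blockRotate_head (hy : ∀ p < T, y p = x (blockRotate T s ℓ a p))
    (hT : s + ℓ ≤ T) (ha : a ≤ ℓ) {j : ℕ} (hj : j ≤ a) :
    tilt (walk y) c (T - a + j) - tilt (walk y) c (T - a)
      = tilt (walk x) c (s + j) - tilt (walk x) c s :=
  tilt_walk_add_sub_of_shift c fun i hi => by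
    rw [hy _ (by omega), blockRotate, if_neg (by omega), if_neg (by omega), if_neg (by omega)]
    congr 1; omega

lemma tilt_walk_blockRotate_tail_end (hy : ∀ p < T, y p = x (blockRotate T s ℓ a p))
    (hT : s + ℓ ≤ T) (ha : a ≤ ℓ) :
    tilt (walk y) c (T - a) - tilt (walk y) c (T - ℓ)
      = tilt (walk x) c (s + ℓ) - tilt (walk x) c (s + a) := by
  have h := tilt_walk_blockRotate_tail c hy hT (j := ℓ - a) le_rfl
  rwa [show T - ℓ + (ℓ - a) = T - a by omega, show s + a + (ℓ - a) = s + ℓ by omega] at h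

end BlockRotate

def extendByZero {T : ℕ} (v : Fin T → ℝ) (p : ℕ) : ℝ := if h : p < T then v ⟨p, h⟩ else 0

lemma sum_ite_lt_eq_walk {T : ℕ} (v : Fin T → ℝ) (t : ℕ) :
    (∑ i : Fin T, if (i : ℕ) < t then v i else 0) = walk (extendByZero v) t := by
  have hv : ∀ i : Fin T, v i = extendByZero v i := fun i => by simp [extendByZero]
  simp_rw [hv]
  rw [Fin.sum_univ_eq_sum_range (fun p => if p < t then extendByZero v p else 0), ← sum_filter,
    walk, ← sum_filter_of_ne (s := range t) (p := (· < T)) fun p _ hp => by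
      by_contra h; simp [extendByZero, h] at hp]
  congr 1; ext; simp; omega

def IsLastMinOn (g : ℕ → ℝ) (n s : ℕ) : Prop :=
  s ≤ n ∧ (∀ i < s, g s ≤ g i) ∧ ∀ r, s < r → r ≤ n → g s < g r

lemma IsLastMinOn.unique {g : ℕ → ℝ} {n s₁ s₂ : ℕ} (h₁ : IsLastMinOn g n s₁)
    (h₂ : IsLastMinOn g n s₂) : s₁ = s₂ := by
  rcases lt_trichotomy s₁ s₂ with h | h | h
  · exact absurd (h₂.2.1 _ h) (not_le.mpr (h₁.2.2 _ h h₂.1))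
  · exact h
  · exact absurd (h₁.2.1 _ h) (not_le.mpr (h₂.2.2 _ h h₁.1))

section Decoding

variable {x y : ℕ → ℝ} {T s ℓ a : ℕ}

lemma IsFace.slope_walk_blockRotate (hf : IsFace (walk x) T s (s + ℓ)) (ha : a ≤ ℓ)
    (hy : ∀ p < T, y p = x (blockRotate T s ℓ a p)) :
    slope (walk y) (T - ℓ) T = slope (walk x) s (s + ℓ) := by
  set c := slope (walk x) s (s + ℓ)
  have hT := hf.le
  have htail := tilt_walk_blockRotate_tail_end c hy hT ha
  have hhead := tilt_walk_blockRotate_head c hy hT ha (j := a) le_rfl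
  rw [show T - a + a = T by omega] at hhead
  have hface := hf.tilt_eq
  have hℓ := hf.lt
  rw [slope_eq_iff (show T - ℓ < T by omega)]
  linarith

lemma IsFace.isLastMinOn_blockRotate (hf : IsFace (walk x) T s (s + ℓ))
    (hy : ∀ p < T, y p = x (blockRotate T s ℓ a p)) :
    IsLastMinOn (tilt (walk y) (slope (walk x) s (s + ℓ))) (T - ℓ) s := by
  set c := slope (walk x) s (s + ℓ)
  have hT := hf.le
  refine ⟨Nat.le_sub_of_add_le hT, fun i hi => ?_, fun r hr hrT => ?_⟩
  · rw [tilt_walk_blockRotate_of_le c hy hT hi.le, tilt_walk_blockRotate_of_le c hy hT le_rfl]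
    exact hf.left i hi
  · obtain ⟨k, rfl⟩ := Nat.exists_eq_add_of_lt hr
    have hmid := tilt_walk_blockRotate_middle c hy (k := k + 1) (by omega)
    have hface := hf.tilt_eq
    have hright := hf.right (s + ℓ + (k + 1)) (by omega) (by omega)
    rw [← add_assoc] at hmid
    linarith

lemma IsFace.tilt_walk_blockRotate_lt (hf : IsFace (walk x) T s (s + ℓ)) (ha : a < ℓ)
    (hy : ∀ p < T, y p = x (blockRotate T s ℓ a p)) {j : ℕ} (hj : T - ℓ < j) (hjT : j ≤ T)
    (hja : j ≠ T - a) :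
    tilt (walk y) (slope (walk x) s (s + ℓ)) (T - a)
      < tilt (walk y) (slope (walk x) s (s + ℓ)) j := by
  set c := slope (walk x) s (s + ℓ)
  have hT := hf.le
  rcases lt_or_gt_of_ne hja with hlt | hgt
  · obtain ⟨i, rfl⟩ : ∃ i, j = T - ℓ + i := ⟨j - (T - ℓ), by omega⟩
    have hj' := tilt_walk_blockRotate_tail c hy hT (j := i) (by omega)
    have hend := tilt_walk_blockRotate_tail_end c hy hT ha.le
    have hface := hf.tilt_eq
    have hinner := hf.inner (s + a + i) (by omega) (by omega)
    linarith
  · obtain ⟨i, rfl⟩ : ∃ i, j = T - a + i := ⟨j - (T - a), by omega⟩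
    have hj' := tilt_walk_blockRotate_head c hy hT ha.le (j := i) (by omega)
    have hinner := hf.inner (s + i) (by omega) (by omega)
    linarith

lemma IsFace.eq_of_blockRotate {x₁ x₂ : ℕ → ℝ} {s₁ s₂ a₁ a₂ : ℕ}
    (hf₁ : IsFace (walk x₁) T s₁ (s₁ + ℓ)) (ha₁ : a₁ < ℓ)
    (hy₁ : ∀ p < T, y p = x₁ (blockRotate T s₁ ℓ a₁ p))
    (hf₂ : IsFace (walk x₂) T s₂ (s₂ + ℓ)) (ha₂ : a₂ < ℓ)
    (hy₂ : ∀ p < T, y p = x₂ (blockRotate T s₂ ℓ a₂ p)) : s₁ = s₂ ∧ a₁ = a₂ := by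
  have hc : slope (walk x₁) s₁ (s₁ + ℓ) = slope (walk x₂) s₂ (s₂ + ℓ) := by
    rw [← hf₁.slope_walk_blockRotate ha₁.le hy₁, hf₂.slope_walk_blockRotate ha₂.le hy₂]
  have hmin₁ := hf₁.isLastMinOn_blockRotate hy₁
  have hmin₂ := hf₂.isLastMinOn_blockRotate hy₂
  rw [hc] at hmin₁
  refine ⟨hmin₁.unique hmin₂, ?_⟩
  by_contra hne
  have hT := hf₁.le
  have h₁ := hf₁.tilt_walk_blockRotate_lt ha₁ hy₁ (j := T - a₂) (by omega) (by omega) (by omega)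
  have h₂ := hf₂.tilt_walk_blockRotate_lt ha₂ hy₂ (j := T - a₁) (by omega) (by omega) (by omega)
  rw [hc] at h₁
  exact lt_asymm h₁ h₂

end Decoding

noncomputable def blockRotatePerm (T s ℓ a : ℕ) : Equiv.Perm (Fin T) :=
  if h : s + ℓ ≤ T ∧ a ≤ ℓ then
    Equiv.ofBijective (fun p => ⟨blockRotate T s ℓ a p, blockRotate_lt h.1 h.2 p.2⟩)
      (Finite.injective_iff_bijective.mp fun p q hpq =>
        Fin.ext (blockRotate_injOn h.1 h.2 p.2 q.2 (Fin.val_eq_of_eq hpq)))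
  else 1

lemma extendByZero_comp_mul_blockRotatePerm {T s ℓ a : ℕ} (hT : s + ℓ ≤ T) (ha : a ≤ ℓ)
    (v : Fin T → ℝ) (σ : Equiv.Perm (Fin T)) {p : ℕ} (hp : p < T) :
    extendByZero (v ∘ ⇑(σ * blockRotatePerm T s ℓ a)) p
      = extendByZero (v ∘ σ) (blockRotate T s ℓ a p) := by
  simp [extendByZero, hp, blockRotate_lt hT ha hp, blockRotatePerm, hT, ha]

section Permutations

variable {T : ℕ}

noncomputable def vertexCount (v : Fin T → ℝ) : ℕ :=
  #{t ∈ Icc 1 T | IsStrictVertex (walk (extendByZero v)) T t}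

noncomputable def permVertices (v : Fin T → ℝ) : Finset (Σ _ : Equiv.Perm (Fin T), ℕ) :=
  univ.sigma fun σ => {t ∈ Icc 1 T | IsStrictVertex (walk (extendByZero (v ∘ σ))) T t}

noncomputable def faceLength (v : Fin T → ℝ) (q : Σ _ : Equiv.Perm (Fin T), ℕ) : ℕ :=
  q.2 - lastMaxSlope (walk (extendByZero (v ∘ q.1))) q.2

lemma isFace_of_mem_permVertices {v : Fin T → ℝ} {σ : Equiv.Perm (Fin T)} {t ℓ : ℕ}
    (h : ⟨σ, t⟩ ∈ permVertices v) (hℓ : faceLength v ⟨σ, t⟩ = ℓ) :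
    ℓ ≤ t ∧ IsFace (walk (extendByZero (v ∘ σ))) T (t - ℓ) (t - ℓ + ℓ) := by
  simp only [permVertices, mem_sigma, mem_univ, mem_filter, mem_Icc, true_and] at h
  have hf := h.2.isFace_lastMaxSlope h.1.1 h.1.2
  simp only [faceLength] at hℓ
  have hs : lastMaxSlope (walk (extendByZero (v ∘ σ))) t = t - ℓ := by have := hf.lt; omega
  have hℓt : ℓ ≤ t := hℓ ▸ Nat.sub_le _ _
  rw [hs] at hf
  exact ⟨hℓt, by rwa [Nat.sub_add_cancel hℓt]⟩

lemma mul_blockRotatePerm_injOn (v : Fin T → ℝ) (ℓ : ℕ) :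
    Set.InjOn (fun q : (Σ _ : Equiv.Perm (Fin T), ℕ) × ℕ =>
        q.1.1 * blockRotatePerm T (q.1.2 - ℓ) ℓ q.2)
      ↑({q ∈ permVertices v | faceLength v q = ℓ} ×ˢ range ℓ) := by
  rintro ⟨⟨σ₁, t₁⟩, a₁⟩ hq₁ ⟨⟨σ₂, t₂⟩, a₂⟩ hq₂ heq
  simp only [coe_product, coe_filter, coe_range, Set.mem_prod, Set.mem_ofPred_eq,
    Set.mem_Iio] at hq₁ hq₂ heq
  obtain ⟨hℓ₁, hf₁⟩ := isFace_of_mem_permVertices hq₁.1.1 hq₁.1.2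
  obtain ⟨hℓ₂, hf₂⟩ := isFace_of_mem_permVertices hq₂.1.1 hq₂.1.2
  have hy : ∀ {σ : Equiv.Perm (Fin T)} {t a : ℕ},
      IsFace (walk (extendByZero (v ∘ σ))) T (t - ℓ) (t - ℓ + ℓ) → a < ℓ → ∀ p < T,
        extendByZero (v ∘ ⇑(σ * blockRotatePerm T (t - ℓ) ℓ a)) p
          = extendByZero (v ∘ σ) (blockRotate T (t - ℓ) ℓ a p) :=
    fun hf ha _ hp => extendByZero_comp_mul_blockRotatePerm hf.le ha.le v _ hp
  obtain ⟨hs, rfl⟩ := hf₁.eq_of_blockRotate hq₁.2 (hy hf₁ hq₁.2)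
    hf₂ hq₂.2 (heq ▸ hy hf₂ hq₂.2)
  obtain rfl : t₁ = t₂ := by omega
  rw [mul_right_cancel heq]

lemma card_faceLength_fiber_mul_le (v : Fin T → ℝ) (ℓ : ℕ) :
    #{q ∈ permVertices v | faceLength v q = ℓ} * ℓ ≤ T ! := by
  have := card_le_card_of_injOn _ (fun _ _ => mem_coe.mpr (mem_univ _))
    (mul_blockRotatePerm_injOn v ℓ)
  rwa [card_product, card_range, card_univ, Fintype.card_perm, Fintype.card_fin] at this

theorem sum_vertexCount_comp_perm_le (v : Fin T → ℝ) :
    ∑ σ : Equiv.Perm (Fin T), (vertexCount (v ∘ σ) : ℝ) ≤ T ! * ∑ k ∈ Icc 1 T, (1 : ℝ) / k := by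
  have hcard : #(permVertices v) = ∑ σ : Equiv.Perm (Fin T), vertexCount (v ∘ σ) := card_sigma _ _
  have hlen : ∀ q ∈ permVertices v, faceLength v q ∈ Icc 1 T := by
    rintro ⟨σ, t⟩ hq
    obtain ⟨_, hf⟩ := isFace_of_mem_permVertices hq rfl
    have := hf.lt; have := hf.le
    simp only [mem_Icc]; omega
  exact_mod_cast hcard ▸ card_le_mul_sum_inv_of_card_fiber_mul_le hlen
    fun ℓ _ => card_faceLength_fiber_mul_le v ℓ

end Permutations

lemma integral_le_of_sum_comp_perm_le {Ω ι α : Type*} [MeasurableSpace Ω] [Fintype ι]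
    [DecidableEq ι] [MeasurableSpace α] {μ : Measure Ω} [IsProbabilityMeasure μ] {X : Ω → ι → α}
    (hX : Measurable X) (hexch : ∀ σ : Equiv.Perm ι, μ.map (fun ω => X ω ∘ σ) = μ.map X)
    {F : (ι → α) → ℝ} (hF : Measurable F) (hFi : Integrable F (μ.map X)) {B : ℝ}
    (hB : ∀ v, ∑ σ : Equiv.Perm ι, F (v ∘ σ) ≤ Fintype.card (Equiv.Perm ι) * B) :
    ∫ ω, F (X ω) ∂μ ≤ B := by
  have hXσ : ∀ σ : Equiv.Perm ι, Measurable fun ω => X ω ∘ σ := fun σ =>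
    measurable_pi_lambda _ fun i => (measurable_pi_apply (σ i)).comp hX
  have hint : ∀ σ : Equiv.Perm ι, Integrable (fun ω => F (X ω ∘ σ)) μ := fun σ =>
    (integrable_map_measure hF.aestronglyMeasurable (hXσ σ).aemeasurable).mp (hexch σ ▸ hFi)
  have hsame : ∀ σ : Equiv.Perm ι, ∫ ω, F (X ω ∘ σ) ∂μ = ∫ ω, F (X ω) ∂μ := fun σ => by
    rw [← integral_map (hXσ σ).aemeasurable hF.aestronglyMeasurable, hexch σ,
      integral_map hX.aemeasurable hF.aestronglyMeasurable]
  have hcard : (0 : ℝ) < Fintype.card (Equiv.Perm ι) := by exact_mod_cast Fintype.card_pos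
  refine le_of_mul_le_mul_left ?_ hcard
  calc (Fintype.card (Equiv.Perm ι) : ℝ) * ∫ ω, F (X ω) ∂μ
      = ∑ σ : Equiv.Perm ι, ∫ ω, F (X ω ∘ σ) ∂μ := by
        simp [hsame, sum_const, card_univ, nsmul_eq_mul]
    _ = ∫ ω, ∑ σ : Equiv.Perm ι, F (X ω ∘ σ) ∂μ := (integral_finsetSum _ fun σ _ => hint σ).symm
    _ ≤ ∫ _, (Fintype.card (Equiv.Perm ι) : ℝ) * B ∂μ :=
        integral_mono (integrable_finsetSum _ fun σ _ => hint σ) (integrable_const _)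
          fun ω => hB (X ω)
    _ = Fintype.card (Equiv.Perm ι) * B := by simp

variable {T : ℕ}

lemma vertexCount_le (v : Fin T → ℝ) : vertexCount v ≤ T :=
  (card_filter_le _ _).trans (by simp)

lemma measurable_walk_extendByZero (t : ℕ) :
    Measurable fun v : Fin T → ℝ => walk (extendByZero v) t :=
  Finset.measurable_sum _ fun p _ => by unfold extendByZero; split_ifs <;> fun_prop

lemma measurable_vertexCount : Measurable fun v : Fin T → ℝ => (vertexCount v : ℝ) := by
  simp only [vertexCount, card_filter]
  push_cast
  refine Finset.measurable_sum _ fun t _ => Measurable.ite ?_ measurable_const measurable_const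
  refine measurableSet_setOfPred.mpr ?_
  unfold IsStrictVertex
  have := fun r => measurable_walk_extendByZero (T := T) r
  fun_prop

lemma integrable_vertexCount (μ : Measure (Fin T → ℝ)) [IsFiniteMeasure μ] :
    Integrable (fun v => (vertexCount v : ℝ)) μ :=
  .of_bound measurable_vertexCount.aestronglyMeasurable T
    (ae_of_all _ fun v => by simpa using vertexCount_le v)

end ConvexMinorant

open ConvexMinorant

theorem expected_convex_minorant_vertices_general {Ω : Type*} [MeasureSpace Ω]
    [IsProbabilityMeasure (ℙ : Measure Ω)]
    (T : ℕ) (X : Fin T → Ω → ℝ)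
    (hmeas : ∀ i, Measurable (X i))
    (hexch : ∀ σ : Equiv.Perm (Fin T),
      Measure.map (fun ω => fun i => X (σ i) ω) (ℙ : Measure Ω)
        = Measure.map (fun ω => fun i => X i ω) (ℙ : Measure Ω))
    (S : ℕ → Ω → ℝ)
    (hS : ∀ t ω, S t ω = ∑ i : Fin T, if (i : ℕ) < t then X i ω else 0)
    (N : Ω → ℕ)
    (hN : ∀ ω, N ω = ((Finset.Icc 1 T).filter (fun t =>
      ∀ i j : ℕ, i < t → t < j → j ≤ T →
        S t ω < S i ω + (S j ω - S i ω) * (((t : ℝ) - i) / ((j : ℝ) - i)))).card) :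
    (∫ ω : Ω, (N ω : ℝ) ∂(ℙ : Measure Ω) ≤ ∑ k ∈ Finset.Icc 1 T, (1 : ℝ) / k) ∧
    (∑ k ∈ Finset.Icc 1 T, (1 : ℝ) / k ≤ Real.log T + 1) := by
  have hN' : ∀ ω, N ω = vertexCount fun i => X i ω := fun ω => by
    simp only [hN ω, hS, sum_ite_lt_eq_walk]; rfl
  refine ⟨?_, ?_⟩
  · simp_rw [hN']
    refine integral_le_of_sum_comp_perm_le (measurable_pi_lambda _ hmeas) hexch
      measurable_vertexCount (integrable_vertexCount _) fun v => ?_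
    rw [Fintype.card_perm, Fintype.card_fin]
    exact sum_vertexCount_comp_perm_le v
  · have := harmonic_le_one_add_log T
    simp only [harmonic_eq_sum_Icc, Rat.cast_sum, Rat.cast_inv, Rat.cast_natCast] at this
    simpa [one_div, add_comm] using this

/-- Sparre Andersen-type bound: for exchangeable real random variables
`X_1,…,X_T` with atomless joint distribution and partial sums `S t`, the
expected number of vertices of the lower convex minorant of `(t, S t)`,
`t = 0,…,T`, excluding the endpoint `(0, 0)`, is at most the harmonic number
`∑_{k=1}^T 1/k ≤ log T + 1`. -/
theorem expected_convex_minorant_vertices {Ω : Type*} [MeasureSpace Ω]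
    [IsProbabilityMeasure (ℙ : Measure Ω)]
    (T : ℕ) (hT : 0 < T) (X : Fin T → Ω → ℝ)
    (hmeas : ∀ i, Measurable (X i))
    (hexch : ∀ σ : Equiv.Perm (Fin T),
      Measure.map (fun ω => fun i => X (σ i) ω) (ℙ : Measure Ω)
        = Measure.map (fun ω => fun i => X i ω) (ℙ : Measure Ω))
    (hatomless : ∀ v : Fin T → ℝ, Measure.map (fun ω => fun i => X i ω) (ℙ : Measure Ω) {v} = 0)
    (S : ℕ → Ω → ℝ)
    (hS : ∀ t ω, S t ω = ∑ i : Fin T, if (i : ℕ) < t then X i ω else 0)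
    (N : Ω → ℕ)
    (hN : ∀ ω, N ω = ((Finset.Icc 1 T).filter (fun t =>
      ∀ i j : ℕ, i < t → t < j → j ≤ T →
        S t ω < S i ω + (S j ω - S i ω) * (((t : ℝ) - i) / ((j : ℝ) - i)))).card) :
    (∫ ω : Ω, (N ω : ℝ) ∂(ℙ : Measure Ω) ≤ ∑ k ∈ Finset.Icc 1 T, (1 : ℝ) / k) ∧
    (∑ k ∈ Finset.Icc 1 T, (1 : ℝ) / k ≤ Real.log T + 1) :=
  expected_convex_minorant_vertices_general T X hmeas hexch S hS N hN
end

section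
/- Let S_0 = 0, S_1, ..., S_n be any real sequence and suppose τ* ∈ argmax_{0 ≤ τ < n} (S_n − S_τ)/(n − τ). Then the point (τ*, S_{τ*}) lies on the lower convex minorant of the points {(t, S_t) : 0 ≤ t ≤ n}; that is, for all 0 ≤ i < τ* < j ≤ n, S_{τ*} ≤ S_i + (S_j − S_i)·(τ* − i)/(j − i). -/
/-- The candidate `τ*` maximizing the average slope `(S_n − S_τ)/(n − τ)` over
`0 ≤ τ < n` lies on the lower convex minorant of the path `(t, S_t)`, `0 ≤ t ≤ n`:
for all `i < τ* < j ≤ n`, `S_{τ*} ≤ S_i + (S_j − S_i)(τ* − i)/(j − i)`. -/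
theorem argmax_slope_on_convex_minorant (n : ℕ) (hn : 0 < n) (S : ℕ → ℝ)
    (hS0 : S 0 = 0) (τs : ℕ) (hτ : τs < n)
    (hmax : ∀ τ : ℕ, τ < n →
      (S n - S τ) / ((n : ℝ) - τ) ≤ (S n - S τs) / ((n : ℝ) - τs)) :
    ∀ i j : ℕ, i < τs → τs < j → j ≤ n →
      S τs ≤ S i + (S j - S i) * (((τs : ℝ) - i) / ((j : ℝ) - i)) := by
  intro i j hij hτj hjn
  set m := (S n - S τs) / ((n : ℝ) - τs) with hm
  have hτr : (τs : ℝ) < n := by exact_mod_cast hτ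
  have hir : (i : ℝ) < τs := by exact_mod_cast hij
  have hjr : (τs : ℝ) < j := by exact_mod_cast hτj
  have hnτ : (0 : ℝ) < (n : ℝ) - τs := by linarith
  have hji : (0 : ℝ) < (j : ℝ) - i := by linarith
  have key : ∀ t : ℕ, t ≤ n → S n - m * ((n : ℝ) - t) ≤ S t := by
    intro t ht
    rcases eq_or_lt_of_le ht with h | h
    · subst h; simp
    · have h2 : (0 : ℝ) < (n : ℝ) - t := by
        have : (t : ℝ) < n := by exact_mod_cast h
        linarith
      have h1 := hmax t h
      rw [div_le_iff₀ h2] at h1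
      linarith [h1]
  have heq : m * ((n : ℝ) - τs) = S n - S τs :=
    div_mul_cancel₀ _ (ne_of_gt hnτ)
  set lam := ((τs : ℝ) - i) / ((j : ℝ) - i) with hlam
  have hlamji : lam * ((j : ℝ) - i) = (τs : ℝ) - i :=
    div_mul_cancel₀ _ (ne_of_gt hji)
  have h0lam : 0 ≤ lam := div_nonneg (by linarith) (le_of_lt hji)
  have hlam1 : lam ≤ 1 := by
    rw [div_le_one hji]; linarith
  have hi' : S n - m * ((n : ℝ) - i) ≤ S i := key i (le_of_lt (by omega))
  have hj' : S n - m * ((n : ℝ) - j) ≤ S j := key j hjn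
  have step1 : (S n - m * ((n : ℝ) - i)) +
      ((S n - m * ((n : ℝ) - j)) - (S n - m * ((n : ℝ) - i))) * lam ≤
      S i + (S j - S i) * lam := by
    nlinarith [mul_nonneg h0lam (sub_nonneg.2 hj'),
      mul_nonneg (sub_nonneg.2 hlam1) (sub_nonneg.2 hi')]
  have step2 : (S n - m * ((n : ℝ) - i)) +
      ((S n - m * ((n : ℝ) - j)) - (S n - m * ((n : ℝ) - i))) * lam = S τs := by
    have : ((S n - m * ((n : ℝ) - j)) - (S n - m * ((n : ℝ) - i))) * lam
        = m * (lam * ((j : ℝ) - i)) := by ring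
    rw [this, hlamji]
    nlinarith [heq]
  linarith [step1, step2]
end
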